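/- arXiv:2112.05539 — 3 statements merged into one kernel-verified Lean document; each statement's English description precedes it below -/
import Mathlib

section
/- For any N ∈ ℕ, any vectors v⁽¹⁾,…,v⁽ᴺ⁾ in ℝ^d, and any function f : ℝ^d → ℂ, the iterated difference Δ_{v⁽¹⁾}⋯Δ_{v⁽ᴺ⁾} f(x) equals the sum over ε = (ε₁,…,ε_N) ∈ {0,1}^N of (−1)^{ε₁+⋯+ε_N} Δ_{h(ε)}^N f(x + h̃(ε)), where h(ε) = −∑_{j=1}^N (ε_j/j) v⁽ʲ⁾ and h̃(ε) = ∑_{j=1}^N ε_j v⁽ʲ⁾. -/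
/-- The difference operator `Δ_h f(x) = f(x+h) - f(x)`. -/
def fdiff {d : ℕ} (h : Fin d → ℝ) (f : (Fin d → ℝ) → ℂ) : (Fin d → ℝ) → ℂ :=
  fun x => f (x + h) - f x

/-- The mixed iterated difference `Δ_{v 0} ⋯ Δ_{v (N-1)} f`. -/
def mixedDiff {d : ℕ} : (N : ℕ) → (Fin N → (Fin d → ℝ)) → ((Fin d → ℝ) → ℂ) →
    ((Fin d → ℝ) → ℂ)
  | 0, _, f => f
  | (N + 1), v, f => fdiff (v 0) (mixedDiff N (fun j => v j.succ) f)

open Finset Function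
lemma sum_ite_update {N : ℕ} {M : Type*} [AddCommMonoid M] (ε : Fin N → Bool) (i : Fin N)
    (b : Bool) (w : Fin N → M) :
    ∑ j : Fin N, (if Function.update ε i b j then w j else 0) =
      (if b then w i else 0) + ∑ j ∈ Finset.univ \ {i}, (if ε j then w j else 0) := by
  have h : (fun j => if Function.update ε i b j then w j else (0:M)) =
      Function.update (fun j => if ε j then w j else 0) i (if b then w i else 0) := by
    funext j
    rcases eq_or_ne j i with rfl | hj
    · simp
    · simp [Function.update_of_ne hj]
  rw [show (∑ j : Fin N, (if Function.update ε i b j then w j else 0)) =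
      ∑ j : Fin N, Function.update (fun j => if ε j then w j else 0) i
        (if b then w i else 0) j from by rw [← h]]
  exact Finset.sum_update_of_mem (mem_univ i) _ _

lemma mixedDiff_eq_sum {d : ℕ} (N : ℕ) (v : Fin N → (Fin d → ℝ)) (f : (Fin d → ℝ) → ℂ)
    (x : Fin d → ℝ) :
    mixedDiff N v f x = ∑ ε : Fin N → Bool,
      (-1 : ℂ) ^ (N + ∑ j : Fin N, if ε j then 1 else 0 : ℕ) *
        f (x + ∑ j : Fin N, (if ε j then v j else 0)) := by
  induction N generalizing x with
  | zero => simp [mixedDiff]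
  | succ N IH =>
      have h0 : mixedDiff (N+1) v f x
          = mixedDiff N (fun j => v j.succ) f (x + v 0)
            - mixedDiff N (fun j => v j.succ) f x := rfl
      rw [h0, IH, IH,
        ← Equiv.sum_comp (Fin.consEquiv (fun _ : Fin (N+1) => Bool)),
        Fintype.sum_prod_type, Fintype.sum_bool]
      simp only [Fin.consEquiv_apply, Fin.sum_univ_succ, Fin.cons_zero, Fin.cons_succ,
        if_true, if_false]
      rw [← Finset.sum_sub_distrib, ← Finset.sum_add_distrib]
      apply Finset.sum_congr rfl
      intro ε _
      simp only [Bool.false_eq_true, if_false, ← add_assoc, zero_add, add_zero, pow_zero]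
      ring

lemma sign_update {N : ℕ} (ε : Fin N → Bool) (i : Fin N) :
    (-1 : ℂ) ^ (∑ j : Fin N, if Function.update ε i (!(ε i)) j then 1 else 0 : ℕ) =
      -(-1 : ℂ) ^ (∑ j : Fin N, if ε j then 1 else 0 : ℕ) := by
  have h1 := sum_ite_update ε i (!(ε i)) (fun _ => (1:ℕ))
  have h2 := sum_ite_update ε i (ε i) (fun _ => (1:ℕ))
  rw [Function.update_eq_self] at h2
  rw [h1, h2]
  cases hb : ε i <;> simp [hb, pow_add, pow_succ]

lemma inner_vanish {d N : ℕ} (v : Fin N → (Fin d → ℝ)) (f : (Fin d → ℝ) → ℂ) (x : Fin d → ℝ)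
    (j : ℕ) (hj : j < N) (z : ℂ) :
    ∑ ε : Fin N → Bool, (-1 : ℂ) ^ (∑ j' : Fin N, if ε j' then 1 else 0 : ℕ) *
      (z * f (x + (∑ j' : Fin N, (if ε j' then v j' else 0)) +
        (j + 1) • (-(∑ j' : Fin N, (((j' : ℕ) : ℝ) + 1)⁻¹ • (if ε j' then v j' else 0))))) = 0 := by
  set i : Fin N := ⟨j, hj⟩ with hi
  set uu : Fin N → (Fin d → ℝ) := fun j' => (((j' : ℕ) : ℝ) + 1)⁻¹ • v j' with huu
  have hite : ∀ (ε : Fin N → Bool),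
      (∑ j' : Fin N, (((j' : ℕ) : ℝ) + 1)⁻¹ • (if ε j' then v j' else 0))
        = ∑ j' : Fin N, (if ε j' then uu j' else 0) := by
    intro ε
    refine Finset.sum_congr rfl fun j' _ => ?_
    by_cases h : ε j' <;> simp [h, huu]
  simp only [hite]
  have key : (j + 1) • uu i = v i := by
    have hc : ((i : ℕ) : ℝ) = (j : ℝ) := by simp [hi]
    rw [huu]
    rw [← Nat.cast_smul_eq_nsmul ℝ, smul_smul, hc]
    rw [show ((j : ℝ) + 1)⁻¹ = (((j+1 : ℕ) : ℝ))⁻¹ by push_cast; ring]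
    rw [show (((j+1 : ℕ)) : ℝ) * (((j+1 : ℕ) : ℝ))⁻¹ = 1 from
      mul_inv_cancel₀ (by positivity)]
    rw [one_smul]
  refine Finset.sum_ninvolution (fun ε => Function.update ε i (!(ε i))) ?_ ?_
    (fun _ => Finset.mem_univ _) ?_
  · intro ε
    have harg : x + (∑ j' : Fin N, (if Function.update ε i (!(ε i)) j' then v j' else 0)) +
        (j + 1) • (-(∑ j' : Fin N, (if Function.update ε i (!(ε i)) j' then uu j' else 0)))
        = x + (∑ j' : Fin N, (if ε j' then v j' else 0)) +
          (j + 1) • (-(∑ j' : Fin N, (if ε j' then uu j' else 0))) := by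
      have h1 := sum_ite_update ε i (!(ε i)) v
      have h2 := sum_ite_update ε i (ε i) v
      have h3 := sum_ite_update ε i (!(ε i)) uu
      have h4 := sum_ite_update ε i (ε i) uu
      rw [Function.update_eq_self] at h2 h4
      rw [h1, h2, h3, h4]
      cases hb : ε i <;>
        simp only [hb, Bool.not_true, Bool.not_false, Bool.false_eq_true, eq_self_iff_true,
          if_true, if_false, zero_add, smul_neg, smul_add, smul_zero, key] <;> abel
    rw [harg, sign_update]
    ring
  · intro ε _
    intro hcon
    have := congrFun hcon i
    simp at this
  · intro ε
    funext j'
    rcases eq_or_ne j' i with rfl | hne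
    · simp
    · simp [Function.update_of_ne hne]

/-- Kemperman's formula: the mixed iterated difference `Δ_{v⁽¹⁾}⋯Δ_{v⁽ᴺ⁾} f(x)` equals the sum
over `ε ∈ {0,1}^N` of `(−1)^{ε₁+⋯+ε_N} Δ_{h(ε)}^N f(x + h̃(ε))`, with
`h(ε) = −∑ⱼ (εⱼ/j) v⁽ʲ⁾` and `h̃(ε) = ∑ⱼ εⱼ v⁽ʲ⁾`. -/
theorem stmt_1 (d N : ℕ) (v : Fin N → (Fin d → ℝ)) (f : (Fin d → ℝ) → ℂ) (x : Fin d → ℝ) :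
    mixedDiff N v f x =
      ∑ ε : Fin N → Bool, (-1 : ℂ) ^ (∑ j : Fin N, if ε j then 1 else 0 : ℕ) *
        (fdiff (-(∑ j : Fin N, (((j : ℕ) : ℝ) + 1)⁻¹ • (if ε j then v j else 0))))^[N] f
          (x + ∑ j : Fin N, (if ε j then v j else 0)) := by
  rw [mixedDiff_eq_sum]
  have hexp : ∀ ε : Fin N → Bool,
      (fdiff (-(∑ j : Fin N, (((j : ℕ) : ℝ) + 1)⁻¹ • (if ε j then v j else 0))))^[N] f
          (x + ∑ j : Fin N, (if ε j then v j else 0))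
        = ∑ k ∈ Finset.range (N+1), ((-1 : ℂ) ^ (N - k) * (N.choose k : ℂ)) *
            f (x + (∑ j : Fin N, (if ε j then v j else 0)) +
              k • (-(∑ j : Fin N, (((j : ℕ) : ℝ) + 1)⁻¹ • (if ε j then v j else 0)))) := by
    intro ε
    rw [show fdiff (-(∑ j : Fin N, (((j : ℕ) : ℝ) + 1)⁻¹ • (if ε j then v j else 0)))
        = fwdDiff (-(∑ j : Fin N, (((j : ℕ) : ℝ) + 1)⁻¹ • (if ε j then v j else 0))) from rfl,
      fwdDiff_iter_eq_sum_shift]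
    refine Finset.sum_congr rfl fun k _ => ?_
    rw [zsmul_eq_mul]
    push_cast
    ring
  simp only [hexp]
  rw [show (∑ ε : Fin N → Bool, (-1 : ℂ) ^ (∑ j : Fin N, if ε j then 1 else 0 : ℕ) *
        ∑ k ∈ Finset.range (N+1), ((-1 : ℂ) ^ (N - k) * (N.choose k : ℂ)) *
          f (x + (∑ j : Fin N, (if ε j then v j else 0)) +
            k • (-(∑ j : Fin N, (((j : ℕ) : ℝ) + 1)⁻¹ • (if ε j then v j else 0)))))
      = ∑ k ∈ Finset.range (N+1), ∑ ε : Fin N → Bool,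
          (-1 : ℂ) ^ (∑ j : Fin N, if ε j then 1 else 0 : ℕ) *
            (((-1 : ℂ) ^ (N - k) * (N.choose k : ℂ)) *
              f (x + (∑ j : Fin N, (if ε j then v j else 0)) +
                k • (-(∑ j : Fin N, (((j : ℕ) : ℝ) + 1)⁻¹ • (if ε j then v j else 0)))))
      from by simp_rw [Finset.mul_sum]; exact Finset.sum_comm]
  rw [Finset.sum_range_succ']
  rw [Finset.sum_eq_zero (fun k hk => inner_vanish v f x k (Finset.mem_range.mp hk) _)]
  rw [zero_add]
  refine Finset.sum_congr rfl fun ε _ => ?_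
  simp only [Nat.sub_zero, Nat.choose_zero_right, Nat.cast_one, zero_smul, add_zero, mul_one]
  rw [pow_add]
  ring
end

section
/- Let g : ℝ → ℂ be Lebesgue measurable. If for some M ≥ 1 one has Δ_h^M g(x) = 0 for all x ∈ ℝ and all h ∈ ℝ, then g is equal to a polynomial of degree at most M − 1. -/
open Finset Polynomial MeasureTheory intervalIntegral
open scoped ENNReal

-- A: degree helper
lemma mydeg (Q : Polynomial ℂ) (a : ℂ) :
    (Q.comp (X + C a) - Q).natDegree ≤ Q.natDegree - 1 := by
  rcases eq_or_ne Q.natDegree 0 with h0 | h0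
  · obtain ⟨q, rfl⟩ := Polynomial.natDegree_eq_zero.mp h0
    simp
  · have hQ0 : Q ≠ 0 := fun h => by simp [h] at h0
    have hndc : (Q.comp (X + C a)).natDegree = Q.natDegree := by
      rw [Polynomial.natDegree_comp, Polynomial.natDegree_X_add_C, mul_one]
    have hlc : (Q.comp (X + C a)).leadingCoeff = Q.leadingCoeff := by
      rw [Polynomial.leadingCoeff_comp (by rw [Polynomial.natDegree_X_add_C]; norm_num)]
      simp [Polynomial.leadingCoeff_X_add_C]
    have hc0 : Q.comp (X + C a) ≠ 0 := by
      intro h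
      rw [h] at hlc
      exact hQ0 (Polynomial.leadingCoeff_eq_zero.mp hlc.symm ▸ by simp_all)
    have hdeg : (Q.comp (X + C a)).degree = Q.degree := by
      rw [Polynomial.degree_eq_natDegree hc0, Polynomial.degree_eq_natDegree hQ0, hndc]
    have := Polynomial.degree_sub_lt hdeg hc0 hlc
    rcases eq_or_ne (Q.comp (X + C a) - Q) 0 with hz | hz
    · simp [hz]
    · have := Polynomial.natDegree_lt_natDegree hz (by rw [hdeg] at this; exact this)
      omega

-- iterated fwdDiff of pointwise sub
lemma myiter_sub (h : ℝ) (n : ℕ) (f g : ℝ → ℂ) (x : ℝ) :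
    (fwdDiff h)^[n] (fun y => f y - g y) x = (fwdDiff h)^[n] f x - (fwdDiff h)^[n] g x := by
  induction n generalizing f g x with
  | zero => simp
  | succ n ih =>
    rw [Function.iterate_succ_apply, Function.iterate_succ_apply, Function.iterate_succ_apply]
    have : fwdDiff h (fun y => f y - g y) = fun y => (fwdDiff h f) y - (fwdDiff h g) y := by
      ext y; simp [fwdDiff]; ring
    rw [this]
    exact ih _ _ _

lemma myiter_zero (h : ℝ) (n : ℕ) (x : ℝ) :
    (fwdDiff h)^[n] (fun _ : ℝ => (0 : ℂ)) x = 0 := by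
  induction n generalizing x with
  | zero => simp
  | succ n ih =>
    rw [Function.iterate_succ_apply]
    have : fwdDiff h (fun _ : ℝ => (0:ℂ)) = fun _ : ℝ => (0:ℂ) := by ext y; simp [fwdDiff]
    rw [this]; exact ih x

-- B: polynomial evaluation satisfies the difference equation
lemma mypoly (n : ℕ) : ∀ (Q : Polynomial ℂ), Q.natDegree < n →
    ∀ (h x : ℝ), (fwdDiff h)^[n] (fun t : ℝ => Q.eval (t : ℂ)) x = 0 := by
  induction n with
  | zero => intro Q hQ; omega
  | succ n ih =>
    intro Q hQ h x
    rw [Function.iterate_succ_apply]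
    have hfd : fwdDiff h (fun t : ℝ => Q.eval (t : ℂ))
        = fun t : ℝ => (Q.comp (X + C (h : ℂ)) - Q).eval (t : ℂ) := by
      ext t
      simp only [fwdDiff, Polynomial.eval_sub, Polynomial.eval_comp, Polynomial.eval_add,
        Polynomial.eval_X, Polynomial.eval_C]
      push_cast
      ring_nf
    rw [hfd]
    rcases Nat.eq_zero_or_pos n with rfl | hn
    · have h0 : Q.natDegree = 0 := by omega
      obtain ⟨q, rfl⟩ := Polynomial.natDegree_eq_zero.mp h0
      simp
    · exact ih _ (lt_of_le_of_lt (mydeg Q _) (by omega)) h x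

-- C: grid lemma
lemma mygrid (N : ℕ) (hN : 1 ≤ N) (w : ℝ → ℂ)
    (hw : ∀ (x h : ℝ), (fwdDiff h)^[N] w x = 0) (δ : ℝ)
    (h0 : ∀ k ∈ Finset.range N, w (k * δ) = 0) :
    ∀ k : ℤ, w (k * δ) = 0 := by
  have hrec : ∀ m : ℤ, ∑ j ∈ Finset.range (N + 1),
      ((-1 : ℤ) ^ (N - j) * N.choose j) • w (((m + j : ℤ) : ℝ) * δ) = 0 := by
    intro m
    have key := fwdDiff_iter_eq_sum_shift δ w N ((m : ℝ) * δ)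
    rw [hw ((m : ℝ) * δ) δ] at key
    have heq : ∑ j ∈ Finset.range (N + 1),
        ((-1 : ℤ) ^ (N - j) * N.choose j) • w (((m + j : ℤ) : ℝ) * δ)
        = ∑ k ∈ Finset.range (N + 1), ((-1 : ℤ) ^ (N - k) * N.choose k) • w ((m : ℝ) * δ + k • δ) := by
      apply Finset.sum_congr rfl
      intro j _
      congr 1
      rw [nsmul_eq_mul]
      push_cast
      ring
    rw [heq]
    exact key.symm
  have main : ∀ n : ℕ, ∀ k : ℤ, -(n : ℤ) ≤ k → k < N + n → w (k * δ) = 0 := by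
    intro n
    induction n with
    | zero =>
      intro k hk1 hk2
      have hk : k.toNat ∈ Finset.range N := by
        simp only [Finset.mem_range]; omega
      have := h0 k.toNat hk
      rwa [show ((k.toNat : ℕ) : ℝ) = (k : ℝ) by exact_mod_cast congrArg Int.cast (Int.toNat_of_nonneg (by omega))] at this
    | succ n ih =>
      intro k hk1 hk2
      by_cases hin : -(n : ℤ) ≤ k ∧ k < N + n
      · exact ih k hin.1 hin.2
      · have hcase : k = -(n+1 : ℕ) ∨ k = (N : ℤ) + n := by omega
        rcases hcase with rfl | rfl
        · -- use recurrence at m = k, peel off j = 0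
          have hr := hrec (-(n+1 : ℕ))
          rw [Finset.sum_range_succ'] at hr
          have hz : ∀ j ∈ Finset.range N,
              ((-1 : ℤ) ^ (N - (j+1)) * N.choose (j+1)) • w (((-(n+1 : ℕ) + ((j+1 : ℕ) : ℤ) : ℤ) : ℝ) * δ) = 0 := by
            intro j hj
            rw [Finset.mem_range] at hj
            rw [ih (-(n+1 : ℕ) + ((j+1 : ℕ) : ℤ)) (by omega) (by omega)]
            simp
          rw [Finset.sum_eq_zero hz, zero_add] at hr
          have : w (((-(n+1 : ℕ) + (0:ℕ) : ℤ) : ℝ) * δ) = 0 := by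
            have hne : ((-1 : ℤ) ^ (N - 0) * N.choose 0) ≠ 0 := by
              simp [pow_ne_zero]
            exact (smul_eq_zero.mp hr).resolve_left hne
          simpa using this
        · -- use recurrence at m = k - N, peel off j = N
          have hr := hrec ((N : ℤ) + n - N)
          rw [Finset.sum_range_succ] at hr
          have hz : ∀ j ∈ Finset.range N,
              ((-1 : ℤ) ^ (N - j) * N.choose j) • w ((((N : ℤ) + n - N + j : ℤ) : ℝ) * δ) = 0 := by
            intro j hj
            rw [Finset.mem_range] at hj
            rw [ih ((N : ℤ) + n - N + j) (by omega) (by omega)]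
            simp
          rw [Finset.sum_eq_zero hz, zero_add] at hr
          have hco : ((-1 : ℤ) ^ (N - N) * N.choose N) = 1 := by simp
          rw [hco, one_smul] at hr
          have harg : ((N : ℤ) + n - N + N : ℤ) = (N : ℤ) + n := by ring
          rw [harg] at hr
          exact hr
  intro k
  exact main (k.natAbs + N) k (by omega) (by omega)

-- helper: degree < N to natDegree < N
lemma mynatdeg {Q : Polynomial ℂ} {N : ℕ} (hN : 1 ≤ N) (h : Q.degree < (N : ℕ)) :
    Q.natDegree < N := by
  rcases eq_or_ne Q 0 with rfl | hQ
  · simp; omega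
  · exact (Polynomial.natDegree_lt_iff_degree_lt hQ).mpr h

-- D: continuous solutions are polynomials
lemma mycont (N : ℕ) (hN : 1 ≤ N) (u : ℝ → ℂ) (hu : Continuous u)
    (heq : ∀ x h : ℝ, (fwdDiff h)^[N] u x = 0) :
    ∃ Q : Polynomial ℂ, Q.degree < (N : ℕ) ∧ ∀ x : ℝ, u x = Q.eval (x : ℂ) := by
  classical
  have hvinj : Set.InjOn (fun k : ℕ => (k : ℂ)) (Finset.range N) :=
    fun a _ b _ hab => Nat.cast_injective hab
  set P : Polynomial ℂ :=
    Lagrange.interpolate (Finset.range N) (fun k : ℕ => (k : ℂ)) (fun k => u k) with hP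
  have hPdeg : P.degree < (N : ℕ) := by
    have hd := Lagrange.degree_interpolate_lt (s := Finset.range N)
      (v := fun k : ℕ => (k : ℂ)) (r := fun k => u k) hvinj
    rwa [Finset.card_range] at hd
  -- general grid upgrade
  have grid : ∀ δ : ℝ, ∀ Pd : Polynomial ℂ, Pd.degree < (N : ℕ) →
      (∀ k ∈ Finset.range N, u (k * δ) = Pd.eval (((k * δ : ℝ) : ℂ))) →
      ∀ k : ℤ, u (k * δ) = Pd.eval (((k * δ : ℝ) : ℂ)) := by
    intro δ Pd hPd hnode
    set w : ℝ → ℂ := fun x => u x - Pd.eval ((x : ℂ)) with hwdef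
    have hw : ∀ x h : ℝ, (fwdDiff h)^[N] w x = 0 := by
      intro x h
      rw [hwdef]
      rw [myiter_sub, heq, mypoly N Pd (mynatdeg hN hPd) h x, sub_zero]
    have h0 : ∀ k ∈ Finset.range N, w (k * δ) = 0 := by
      intro k hk
      simp only [hwdef]
      rw [hnode k hk, sub_self]
    have hgr := mygrid N hN w hw δ h0
    intro k
    have hk := hgr k
    simp only [hwdef] at hk
    linear_combination hk
  -- the integer grid
  have hPnode : ∀ k ∈ Finset.range N, u (k * (1:ℝ)) = P.eval (((k * (1:ℝ) : ℝ) : ℂ)) := by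
    intro k hk
    have hn := Lagrange.eval_interpolate_at_node (v := fun k : ℕ => (k : ℂ))
      (r := fun k => u k) hvinj hk
    rw [hP]
    push_cast
    simpa using hn.symm
  have hPint : ∀ k : ℤ, u (k * (1:ℝ)) = P.eval (((k * (1:ℝ) : ℝ) : ℂ)) :=
    grid 1 P hPdeg hPnode
  -- finer grids
  have hfine : ∀ n : ℕ, ∀ k : ℤ,
      u (k * ((n : ℝ) + 1)⁻¹) = P.eval (((k * ((n : ℝ) + 1)⁻¹ : ℝ) : ℂ)) := by
    intro n
    set δ : ℝ := ((n : ℝ) + 1)⁻¹ with hδ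
    have hδ0 : ((n : ℝ) + 1) ≠ 0 := by positivity
    have hδne : δ ≠ 0 := by rw [hδ]; exact inv_ne_zero hδ0
    have hvinj2 : Set.InjOn (fun k : ℕ => (((k : ℝ) * δ : ℝ) : ℂ)) (Finset.range N) := by
      intro a _ b _ hab
      simp only [Complex.ofReal_inj] at hab
      have hab2 : (a : ℝ) = b := mul_right_cancel₀ hδne hab
      exact_mod_cast hab2
    set Pn : Polynomial ℂ := Lagrange.interpolate (Finset.range N)
      (fun k : ℕ => (((k : ℝ) * δ : ℝ) : ℂ)) (fun k => u (k * δ)) with hPn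
    have hPndeg : Pn.degree < (N : ℕ) := by
      have hd := Lagrange.degree_interpolate_lt (s := Finset.range N)
        (v := fun k : ℕ => (((k : ℝ) * δ : ℝ) : ℂ)) (r := fun k => u (k * δ)) hvinj2
      rwa [Finset.card_range] at hd
    have hPnnode : ∀ k ∈ Finset.range N, u (k * δ) = Pn.eval (((k * δ : ℝ) : ℂ)) := by
      intro k hk
      have hn := Lagrange.eval_interpolate_at_node (v := fun k : ℕ => (((k : ℝ) * δ : ℝ) : ℂ))
        (r := fun k => u (k * δ)) hvinj2 hk
      rw [hPn]
      exact hn.symm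
    have hPngrid : ∀ k : ℤ, u (k * δ) = Pn.eval (((k * δ : ℝ) : ℂ)) :=
      grid δ Pn hPndeg hPnnode
    -- Pn = P
    have hPnP : Pn = P := by
      apply Polynomial.eq_of_degrees_lt_of_eval_index_eq (v := fun k : ℕ => (k : ℂ))
        (s := Finset.range N) hvinj
        (by rw [Finset.card_range]; exact hPndeg) (by rw [Finset.card_range]; exact hPdeg)
      intro j hj
      have h1 := hPngrid ((j : ℤ) * ((n : ℕ) + 1))
      have harg : ((((j : ℤ) * ((n : ℕ) + 1) : ℤ) : ℝ)) * δ = (j : ℝ) := by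
        rw [hδ]
        push_cast
        field_simp
      rw [harg] at h1
      have h2 := hPint (j : ℤ)
      have harg2 : (((j : ℤ)) : ℝ) * (1:ℝ) = (j : ℝ) := by push_cast; ring
      rw [harg2] at h2
      have goalcast : ((j : ℕ) : ℂ) = (((j : ℕ) : ℝ) : ℂ) := by push_cast; rfl
      simp only [goalcast]
      rw [← h1, ← h2]
    rw [hPnP] at hPngrid
    exact hPngrid
  -- density
  refine ⟨P, hPdeg, fun x => ?_⟩
  set y : ℕ → ℝ := fun m => ((⌊x * ((m : ℝ) + 1)⌋ : ℤ) : ℝ) * ((m : ℝ) + 1)⁻¹ with hy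
  have hymem : ∀ m : ℕ, u (y m) = P.eval (((y m : ℝ) : ℂ)) := by
    intro m
    exact hfine m ⌊x * ((m : ℝ) + 1)⌋
  have hbound : ∀ m : ℕ, dist (y m) x ≤ ((m : ℝ) + 1)⁻¹ := by
    intro m
    have hm0 : (0:ℝ) < (m : ℝ) + 1 := by positivity
    have hinv0 : (0:ℝ) < ((m : ℝ) + 1)⁻¹ := by positivity
    set z : ℝ := x * ((m : ℝ) + 1) with hz
    have hfl : z - 1 ≤ ((⌊z⌋ : ℤ) : ℝ) := le_of_lt (Int.sub_one_lt_floor _)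
    have hfl2 : ((⌊z⌋ : ℤ) : ℝ) ≤ z := Int.floor_le _
    have hkey : y m - x = (((⌊z⌋ : ℤ) : ℝ) - z) * ((m : ℝ) + 1)⁻¹ := by
      rw [hy, hz]
      field_simp
    rw [Real.dist_eq, hkey, abs_mul, abs_of_pos hinv0]
    have : |((⌊z⌋ : ℤ) : ℝ) - z| ≤ 1 := abs_le.mpr ⟨by linarith, by linarith⟩
    nlinarith
  have hytend : Filter.Tendsto y Filter.atTop (nhds x) := by
    rw [tendsto_iff_dist_tendsto_zero]
    apply squeeze_zero (fun m => dist_nonneg) hbound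
    have h1 : Filter.Tendsto (fun m : ℕ => 1 / ((m : ℝ) + 1)) Filter.atTop (nhds 0) :=
      tendsto_one_div_add_atTop_nhds_zero_nat
    simpa [one_div] using h1
  have t1 : Filter.Tendsto (fun m => u (y m)) Filter.atTop (nhds (u x)) :=
    (hu.tendsto x).comp hytend
  have hcP : Continuous fun r : ℝ => P.eval ((r : ℂ)) :=
    (Polynomial.continuous P).comp Complex.continuous_ofReal
  have t2 : Filter.Tendsto (fun m => P.eval (((y m : ℝ) : ℂ))) Filter.atTop
      (nhds (P.eval ((x : ℂ)))) := (hcP.tendsto x).comp hytend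
  have t1' : Filter.Tendsto (fun m => u (y m)) Filter.atTop (nhds (P.eval ((x : ℂ)))) := by
    have : (fun m => u (y m)) = fun m => P.eval (((y m : ℝ) : ℂ)) := funext hymem
    rw [this]
    exact t2
  exact tendsto_nhds_unique t1 t1'
-- E1: rearranged recurrence
lemma myrearr (M : ℕ) (g : ℝ → ℂ) (h : ∀ x h' : ℝ, (fwdDiff h')^[M] g x = 0) :
    ∀ x h' : ℝ, ((-1 : ℤ) ^ M) • g x
      = ∑ k ∈ Finset.range M,
          (-((-1 : ℤ) ^ (M - (k+1)) * (M.choose (k+1)))) • g (x + ((k : ℝ) + 1) * h') := by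
  intro x h'
  have key := fwdDiff_iter_eq_sum_shift h' g M x
  rw [h x h'] at key
  rw [Finset.sum_range_succ'] at key
  have hlast : ((-1 : ℤ) ^ (M - 0) * (M.choose 0)) • g (x + (0:ℕ) • h') = ((-1:ℤ)^M) • g x := by
    simp
  rw [hlast] at key
  have hterm : ∀ k ∈ Finset.range M,
      ((-1 : ℤ) ^ (M - (k+1)) * (M.choose (k+1))) • g (x + (k+1 : ℕ) • h')
      = ((-1 : ℤ) ^ (M - (k+1)) * (M.choose (k+1))) • g (x + ((k : ℝ) + 1) * h') := by
    intro k _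
    congr 1
    rw [nsmul_eq_mul]
    push_cast
    ring
  rw [Finset.sum_congr rfl hterm] at key
  have := key.symm
  rw [← eq_neg_iff_add_eq_zero] at this
  have hneg : ∑ k ∈ Finset.range M,
      (-((-1:ℤ)^(M-(k+1)) * (M.choose (k+1)))) • g (x + ((k:ℝ)+1)*h')
      = -∑ k ∈ Finset.range M,
          ((-1:ℤ)^(M-(k+1)) * (M.choose (k+1))) • g (x + ((k:ℝ)+1)*h') := by
    rw [← Finset.sum_neg_distrib]
    exact Finset.sum_congr rfl fun k _ => neg_smul _ _
  rw [hneg, this, neg_neg]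
-- E2: local boundedness
lemma mybdd (M : ℕ) (hM : 1 ≤ M) (g : ℝ → ℂ) (hg : Measurable g)
    (h : ∀ x h' : ℝ, (fwdDiff h')^[M] g x = 0) (R : ℝ) (hR : 0 < R) :
    ∃ C : ℝ, ∀ x : ℝ, |x| ≤ R → ‖g x‖ ≤ C := by
  classical
  set W : Set ℝ := Set.Icc (-R) (R + 2 * M) with hW
  set E : ℕ → Set ℝ := fun m => W ∩ {y | ‖g y‖ ≤ (m : ℝ)} with hE
  set D : ℕ → Set ℝ := fun m => W \ E m with hD
  have hDm : ∀ m, MeasurableSet (D m) := by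
    intro m
    apply MeasurableSet.diff measurableSet_Icc
    exact measurableSet_Icc.inter (measurableSet_le hg.norm measurable_const)
  have hDanti : Antitone D := by
    intro m m' hmm'
    apply Set.diff_subset_diff_right
    apply Set.inter_subset_inter_right
    intro y hy
    simp only [Set.mem_setOf_eq] at hy ⊢
    exact hy.trans (Nat.cast_le.mpr hmm')
  have hDint : ⋂ m, D m = ∅ := by
    ext y
    simp only [Set.mem_iInter, Set.mem_empty_iff_false, iff_false, not_forall]
    obtain ⟨m, hm⟩ := exists_nat_ge ‖g y‖
    exact ⟨m, fun hy => hy.2 ⟨hy.1, hm⟩⟩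
  have hWfin : volume W ≠ ⊤ := (measure_Icc_lt_top (μ := volume)).ne
  have htend : Filter.Tendsto (volume ∘ D) Filter.atTop (nhds 0) := by
    have ht := tendsto_measure_iInter_atTop (fun m => (hDm m).nullMeasurableSet) hDanti
      ⟨0, ((measure_mono Set.diff_subset).trans_lt (measure_Icc_lt_top (μ := volume))).ne⟩
    rwa [hDint, measure_empty] at ht
  have hMR : (0:ℝ) < (M:ℝ) := by exact_mod_cast hM
  have hε : (0:ℝ≥0∞) < ENNReal.ofReal (1 / (2 * M)) := ENNReal.ofReal_pos.mpr (by positivity)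
  obtain ⟨m, hm⟩ := (htend.eventually_lt_const hε).exists
  refine ⟨2 ^ M * m, fun x hx => ?_⟩
  obtain ⟨hx1, hx2⟩ := abs_le.mp hx
  -- bad set of steps
  set U : Set ℝ := ⋃ k ∈ Finset.range M, (fun h' : ℝ => x + ((k : ℝ) + 1) * h') ⁻¹' (D m)
    with hU
  have hpre : ∀ k ∈ Finset.range M,
      volume ((fun h' : ℝ => x + ((k : ℝ) + 1) * h') ⁻¹' (D m)) ≤ volume (D m) := by
    intro k _
    have hc : ((k : ℝ) + 1) ≠ 0 := by positivity
    have hcomp : (fun h' : ℝ => x + ((k : ℝ) + 1) * h')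
        = (fun t : ℝ => x + t) ∘ (fun h' : ℝ => ((k : ℝ) + 1) * h') := rfl
    rw [hcomp, Set.preimage_comp]
    rw [Real.volume_preimage_mul_left hc]
    have hadd : volume ((fun t : ℝ => x + t) ⁻¹' (D m)) = volume (D m) :=
      measure_preimage_add volume x (D m)
    rw [hadd]
    calc ENNReal.ofReal |((k:ℝ)+1)⁻¹| * volume (D m)
        ≤ 1 * volume (D m) := by
          apply mul_le_mul_left
          apply ENNReal.ofReal_le_one.mpr
          rw [abs_of_pos (by positivity)]
          rw [inv_le_one_iff₀]
          right; linarith [Nat.cast_nonneg (α := ℝ) k]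
      _ = volume (D m) := one_mul _
  have hUle : volume U < ENNReal.ofReal 1 := by
    calc volume U ≤ ∑ k ∈ Finset.range M,
          volume ((fun h' : ℝ => x + ((k : ℝ) + 1) * h') ⁻¹' (D m)) :=
        measure_biUnion_finset_le _ _
      _ ≤ ∑ _k ∈ Finset.range M, volume (D m) := Finset.sum_le_sum hpre
      _ = (M : ℝ≥0∞) * volume (D m) := by
          rw [Finset.sum_const, Finset.card_range, nsmul_eq_mul]
      _ ≤ (M : ℝ≥0∞) * ENNReal.ofReal (1 / (2 * M)) := mul_le_mul_right hm.le _
      _ = ENNReal.ofReal ((M : ℝ) * (1 / (2 * M))) := by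
          rw [ENNReal.ofReal_mul (by positivity)]
          congr 1
          exact (ENNReal.ofReal_natCast M).symm
      _ = ENNReal.ofReal (1/2) := by
          congr 1
          field_simp
      _ < ENNReal.ofReal 1 := ENNReal.ofReal_lt_ofReal_iff (by norm_num) |>.mpr (by norm_num)
  have hIccU : ¬ (Set.Icc (1:ℝ) 2 ⊆ U) := by
    intro hsub
    have hle := measure_mono (μ := volume) hsub
    rw [Real.volume_Icc] at hle
    norm_num at hle
    rw [ENNReal.ofReal_one] at hUle
    exact absurd (lt_of_le_of_lt hle hUle) (lt_irrefl _)
  obtain ⟨h', hh'Icc, hh'U⟩ := Set.not_subset.mp hIccU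
  obtain ⟨hh1, hh2⟩ := hh'Icc
  -- each point lands in E m
  have hpt : ∀ k ∈ Finset.range M, ‖g (x + ((k : ℝ) + 1) * h')‖ ≤ (m : ℝ) := by
    intro k hk
    have hkM : (k : ℝ) + 1 ≤ (M : ℝ) := by
      rw [Finset.mem_range] at hk
      exact_mod_cast Nat.succ_le_of_lt hk
    have hk0 : (0:ℝ) ≤ (k : ℝ) := Nat.cast_nonneg k
    have hmemW : x + ((k : ℝ) + 1) * h' ∈ W := by
      constructor
      · nlinarith
      · nlinarith
    have hnotD : x + ((k : ℝ) + 1) * h' ∉ D m := by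
      intro hmem
      apply hh'U
      rw [hU]
      exact Set.mem_biUnion hk hmem
    have : x + ((k : ℝ) + 1) * h' ∈ E m := by
      by_contra hnot
      exact hnotD ⟨hmemW, hnot⟩
    exact this.2
  -- conclude
  have hre := myrearr M g h x h'
  have hnorm : ‖g x‖ = ‖((-1 : ℤ) ^ M) • g x‖ := by
    rw [zsmul_eq_mul]
    push_cast
    rw [norm_mul, norm_pow, norm_neg, norm_one, one_pow, one_mul]
  rw [hnorm, hre]
  calc ‖∑ k ∈ Finset.range M,
        (-((-1 : ℤ) ^ (M - (k+1)) * (M.choose (k+1)))) • g (x + ((k : ℝ) + 1) * h')‖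
      ≤ ∑ k ∈ Finset.range M,
        ‖(-((-1 : ℤ) ^ (M - (k+1)) * (M.choose (k+1)))) • g (x + ((k : ℝ) + 1) * h')‖ :=
        norm_sum_le _ _
    _ ≤ ∑ k ∈ Finset.range M, (M.choose (k+1) : ℝ) * (m : ℝ) := by
        apply Finset.sum_le_sum
        intro k hk
        rw [zsmul_eq_mul, norm_mul]
        have hco : ‖((-((-1 : ℤ) ^ (M - (k+1)) * (M.choose (k+1))) : ℤ) : ℂ)‖
            = (M.choose (k+1) : ℝ) := by
          push_cast
          rw [norm_neg, norm_mul, norm_pow, norm_neg, norm_one, one_pow, one_mul]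
          exact Complex.norm_natCast _
        rw [hco]
        exact mul_le_mul_of_nonneg_left (hpt k hk) (Nat.cast_nonneg _)
    _ ≤ 2 ^ M * (m : ℝ) := by
        rw [← Finset.sum_mul]
        apply mul_le_mul_of_nonneg_right _ (Nat.cast_nonneg m)
        have hsum : ∑ k ∈ Finset.range M, M.choose (k+1) ≤ 2 ^ M := by
          have h1 := Nat.sum_range_choose M
          rw [Finset.sum_range_succ'] at h1
          omega
        calc (∑ k ∈ Finset.range M, (M.choose (k+1) : ℝ))
            = ((∑ k ∈ Finset.range M, M.choose (k+1) : ℕ) : ℝ) := by push_cast; ring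
          _ ≤ ((2:ℝ) ^ M) := by exact_mod_cast hsum
-- F: interval integrability
lemma myii (M : ℕ) (hM : 1 ≤ M) (g : ℝ → ℂ) (hg : Measurable g)
    (h : ∀ x h' : ℝ, (fwdDiff h')^[M] g x = 0) :
    ∀ a b : ℝ, IntervalIntegrable g volume a b := by
  intro a b
  obtain ⟨C, hC⟩ := mybdd M hM g hg h (|a| + |b| + 1) (by positivity)
  rw [intervalIntegrable_iff]
  apply Measure.integrableOn_of_bounded (M := C)
  · exact (measure_Ioc_lt_top (μ := volume)).ne
  · exact hg.aestronglyMeasurable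
  · rw [ae_restrict_iff' measurableSet_uIoc]
    filter_upwards with y
    intro hy
    rw [Set.mem_uIoc] at hy
    apply hC
    rw [abs_le]
    have e1 := neg_abs_le a
    have e2 := le_abs_self a
    have e3 := neg_abs_le b
    have e4 := le_abs_self b
    rcases hy with ⟨h1, h2⟩ | ⟨h1, h2⟩ <;> constructor <;> linarith
-- G: closure of integrability under fwdDiff
lemma myii_fwd (φ : ℝ → ℂ) (hφ : ∀ a b : ℝ, IntervalIntegrable φ volume a b) (h : ℝ) :
    ∀ a b : ℝ, IntervalIntegrable (fwdDiff h φ) volume a b := by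
  intro a b
  have h1 : IntervalIntegrable (fun x => φ (x + h)) volume a b := by
    have h2 := (hφ (a + h) (b + h)).comp_add_right h
    simpa using h2
  exact h1.sub (hφ a b)

lemma myii_iter (φ : ℝ → ℂ) (hφ : ∀ a b : ℝ, IntervalIntegrable φ volume a b) (h : ℝ) :
    ∀ n : ℕ, ∀ a b : ℝ, IntervalIntegrable ((fwdDiff h)^[n] φ) volume a b := by
  intro n
  induction n with
  | zero => simpa using hφ
  | succ n ih =>
    intro a b
    rw [Function.iterate_succ_apply']
    exact myii_fwd _ ih h a b

-- swap fwdDiff with the moving-window integral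
lemma myswap (φ : ℝ → ℂ) (hφ : ∀ a b : ℝ, IntervalIntegrable φ volume a b) (h c : ℝ) :
    fwdDiff h (fun x => ∫ t in x..x + c, φ t) = fun x => ∫ t in x..x + c, fwdDiff h φ t := by
  ext x
  show (∫ t in (x + h)..(x + h + c), φ t) - ∫ t in x..x + c, φ t = _
  have hint : IntervalIntegrable (fun t => φ (t + h)) volume x (x + c) := by
    have h2 := (hφ (x + h) (x + c + h)).comp_add_right h
    simpa using h2
  have hsub : (∫ t in x..x + c, fwdDiff h φ t)
      = (∫ t in x..x + c, φ (t + h)) - ∫ t in x..x + c, φ t := by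
    rw [← intervalIntegral.integral_sub hint (hφ x (x + c))]
    rfl
  rw [hsub, intervalIntegral.integral_comp_add_right (fun t => φ t) h]
  rw [show x + h + c = x + c + h by ring]

-- the primitive satisfies the difference equation of one order higher
lemma myFeq (Mn : ℕ) (g : ℝ → ℂ) (hgi : ∀ a b : ℝ, IntervalIntegrable g volume a b)
    (h : ∀ x h' : ℝ, (fwdDiff h')^[Mn] g x = 0) :
    ∀ x h' : ℝ, (fwdDiff h')^[Mn + 1] (fun y => ∫ t in (0:ℝ)..y, g t) x = 0 := by
  intro x h'
  have hdF : fwdDiff h' (fun y => ∫ t in (0:ℝ)..y, g t)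
      = fun y => ∫ t in y..y + h', g t := by
    ext y
    show (∫ t in (0:ℝ)..(y + h'), g t) - ∫ t in (0:ℝ)..y, g t = _
    have hadj := intervalIntegral.integral_add_adjacent_intervals
      (hgi 0 y) (hgi y (y + h'))
    linear_combination -hadj
  have claim : ∀ n : ℕ, (fwdDiff h')^[n] (fun y => ∫ t in y..y + h', g t)
      = fun y => ∫ t in y..y + h', ((fwdDiff h')^[n] g) t := by
    intro n
    induction n with
    | zero => simp
    | succ n ih =>
      rw [Function.iterate_succ_apply', ih,
        myswap ((fwdDiff h')^[n] g) (myii_iter g hgi h' n) h' h']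
      rw [show (fwdDiff h')^[n+1] g = fwdDiff h' ((fwdDiff h')^[n] g) from
        Function.iterate_succ_apply' _ _ _]
  rw [Function.iterate_succ_apply, hdF, claim Mn]
  show (∫ t in x..x + h', ((fwdDiff h')^[Mn] g) t) = 0
  have hzero : Set.EqOn (fun t => ((fwdDiff h')^[Mn] g) t) (fun _ => (0:ℂ))
      (Set.uIcc x (x + h')) := fun t _ => h t h'
  rw [intervalIntegral.integral_congr hzero]
  simp
/-- The difference operator `Δ_h g(x) = g(x+h) - g(x)` on functions on `ℝ`. -/
def fdiffR (h : ℝ) (g : ℝ → ℂ) : ℝ → ℂ := fun x => g (x + h) - g x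

/-- A Lebesgue measurable `g : ℝ → ℂ` with `Δ_h^M g(x) = 0` for all `x, h ∈ ℝ`
(`M ≥ 1`) is a polynomial of degree at most `M - 1`. -/
theorem stmt_3 (M : ℕ) (hM : 1 ≤ M) (g : ℝ → ℂ) (hg : Measurable g)
    (h : ∀ (x h' : ℝ), (fdiffR h')^[M] g x = 0) :
    ∃ P : Polynomial ℂ, P.natDegree ≤ M - 1 ∧ ∀ x : ℝ, g x = Polynomial.eval (x : ℂ) P := by
  have hconv : ∀ (x h' : ℝ), (fwdDiff h')^[M] g x = 0 := h
  -- integrability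
  have hgi : ∀ a b : ℝ, IntervalIntegrable g volume a b := myii M hM g hg hconv
  -- the primitive
  set F : ℝ → ℂ := fun y => ∫ t in (0:ℝ)..y, g t with hF
  have hFc : Continuous F := intervalIntegral.continuous_primitive hgi 0
  have hFeq : ∀ x h' : ℝ, (fwdDiff h')^[M + 1] F x = 0 := myFeq M g hgi hconv
  obtain ⟨Q, hQdeg, hQ⟩ := mycont (M + 1) (by omega) F hFc hFeq
  have hQnat : Q.natDegree ≤ M := by
    have := mynatdeg (by omega) hQdeg
    omega
  -- coefficients
  set d : ℕ → ℤ := fun k => (-1 : ℤ) ^ M * (-((-1 : ℤ) ^ (M - (k+1)) * (M.choose (k+1)))) with hd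
  -- the polynomial
  set P : Polynomial ℂ := ∑ k ∈ Finset.range M,
      Polynomial.C (((d k : ℤ) : ℂ) * (((k : ℝ) + 1 : ℝ) : ℂ)⁻¹) *
        (Q.comp (Polynomial.X + Polynomial.C ((((k : ℝ) + 1 : ℝ)) : ℂ)) - Q) with hPdef
  refine ⟨P, ?_, ?_⟩
  · -- degree bound
    apply Polynomial.natDegree_sum_le_of_forall_le
    intro k _
    apply le_trans (Polynomial.natDegree_C_mul_le _ _)
    apply le_trans (mydeg Q _)
    omega
  · intro x
    -- the pointwise recurrence with both signs absorbed
    have hsq : ((-1 : ℤ) ^ M * (-1 : ℤ) ^ M) = 1 := by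
      rw [← pow_add]
      exact Even.neg_one_pow ⟨M, rfl⟩
    have hpt : ∀ h' : ℝ, g x = ∑ k ∈ Finset.range M,
        ((d k : ℤ) : ℂ) * g (x + ((k : ℝ) + 1) * h') := by
      intro h'
      have h1 := myrearr M g hconv x h'
      calc g x = ((-1 : ℤ) ^ M * (-1 : ℤ) ^ M) • g x := by rw [hsq, one_smul]
        _ = (-1 : ℤ) ^ M • (((-1 : ℤ) ^ M) • g x) := by rw [smul_smul]
        _ = (-1 : ℤ) ^ M • (∑ k ∈ Finset.range M,
              (-((-1 : ℤ) ^ (M - (k+1)) * (M.choose (k+1)))) • g (x + ((k : ℝ) + 1) * h')) := by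
            rw [h1]
        _ = ∑ k ∈ Finset.range M,
              (-1 : ℤ) ^ M • ((-((-1 : ℤ) ^ (M - (k+1)) * (M.choose (k+1)))) •
                g (x + ((k : ℝ) + 1) * h')) := Finset.smul_sum
        _ = ∑ k ∈ Finset.range M, ((d k : ℤ) : ℂ) * g (x + ((k : ℝ) + 1) * h') := by
            apply Finset.sum_congr rfl
            intro k _
            rw [smul_smul, hd, zsmul_eq_mul]
    -- integrability of the integrands
    have hq : ∀ a b : ℝ, IntervalIntegrable (fun t => g (x + t)) volume a b := by
      intro a b
      have h2 := (hgi (x + a) (x + b)).comp_add_left x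
      simpa using h2
    have hqc : ∀ k : ℕ, IntervalIntegrable (fun h' : ℝ => g (x + ((k : ℝ) + 1) * h'))
        volume 0 1 := by
      intro k
      have hc0 : ((k : ℝ) + 1) ≠ 0 := by positivity
      have h2 := (hq 0 ((k : ℝ) + 1)).comp_mul_left (c := (k : ℝ) + 1)
      rw [zero_div, div_self hc0] at h2
      exact h2
    -- integrate the recurrence over h' ∈ [0,1]
    have hstep : g x = ∑ k ∈ Finset.range M,
        ((d k : ℤ) : ℂ) * ∫ h' in (0:ℝ)..1, g (x + ((k : ℝ) + 1) * h') := by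
      have h3 : g x = ∫ _h' in (0:ℝ)..1, g x := by
        rw [intervalIntegral.integral_const]
        norm_num
      rw [h3]
      have h4 : Set.EqOn (fun _ : ℝ => g x)
          (fun h' : ℝ => ∑ k ∈ Finset.range M,
            ((d k : ℤ) : ℂ) * g (x + ((k : ℝ) + 1) * h')) (Set.uIcc (0:ℝ) 1) :=
        fun h' _ => hpt h'
      rw [intervalIntegral.integral_congr h4]
      rw [intervalIntegral.integral_finset_sum]
      · apply Finset.sum_congr rfl
        intro k _
        rw [intervalIntegral.integral_const_mul]
      · intro k _
        exact (hqc k).const_mul _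
    -- evaluate each integral via the primitive
    have hval : ∀ k : ℕ, (∫ h' in (0:ℝ)..1, g (x + ((k : ℝ) + 1) * h'))
        = (((k : ℝ) + 1))⁻¹ • (Q.eval (((((k : ℝ) + 1) + x : ℝ)) : ℂ) - Q.eval ((x : ℝ) : ℂ)) := by
      intro k
      have hc0 : ((k : ℝ) + 1) ≠ 0 := by positivity
      have hcomm : (fun h' : ℝ => g (x + ((k : ℝ) + 1) * h'))
          = fun h' : ℝ => g (((k : ℝ) + 1) * h' + x) := by
        ext h'; ring_nf
      rw [hcomm]
      rw [intervalIntegral.integral_comp_mul_add g hc0 x]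
      rw [mul_zero, zero_add, mul_one]
      have hadj := intervalIntegral.integral_add_adjacent_intervals
        (hgi 0 x) (hgi x (((k : ℝ) + 1) + x))
      have hFv : (∫ t in x..(((k : ℝ) + 1) + x), g t)
          = Q.eval (((((k : ℝ) + 1) + x : ℝ)) : ℂ) - Q.eval ((x : ℝ) : ℂ) := by
        rw [← hQ, ← hQ, hF]
        show (∫ t in x..(((k : ℝ) + 1) + x), g t)
            = (∫ t in (0:ℝ)..(((k : ℝ) + 1) + x), g t) - ∫ t in (0:ℝ)..x, g t
        linear_combination hadj
      rw [hFv]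
    rw [hstep]
    rw [hPdef]
    rw [Polynomial.eval_finset_sum]
    apply Finset.sum_congr rfl
    intro k _
    rw [hval k]
    rw [Polynomial.eval_mul, Polynomial.eval_C, Polynomial.eval_sub, Polynomial.eval_comp,
      Polynomial.eval_add, Polynomial.eval_X, Polynomial.eval_C]
    rw [Complex.real_smul]
    push_cast
    ring
end

section
/- Let 1 < p < ∞ and p ≤ r ≤ ∞, γ ∈ ℝ. For a function G : ℝ^d × ℤ → ℂ define (T_{−γ/p}G)(x,j) = 2^{−jγ/p} G(x,j). Then ‖T_{−γ/p} G‖_{ℓ^r(L^{p,r}(ℝ^d))} ≤ C ‖G‖_{L^{p,r}(μ_γ)}, where μ_γ is the measure on ℝ^d × ℤ given by μ_γ(E) = ∑_{k∈ℤ} 2^{−kγ} ∫ 1_E(x,k) dx, and ℓ^r(L^{p,r}) means first taking the Lorentz L^{p,r}(ℝ^d) norm in x, then the ℓ^r norm in j. -/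
open MeasureTheory ENNReal

lemma aux_tsum_rpow {ι : Type*} (a : ι → ℝ≥0∞) {s : ℝ} (hs : 1 ≤ s) :
    ∑' i, a i ^ s ≤ (∑' i, a i) ^ s := by
  have hs0 : 0 < s := lt_of_lt_of_le one_pos hs
  by_cases hS : ∑' i, a i = ⊤
  · rw [hS, ENNReal.top_rpow_of_pos hs0]; exact le_top
  · have key : ∀ i, a i ^ s ≤ (∑' i, a i) ^ (s - 1) * a i := by
      intro i
      by_cases hai : a i = 0
      · simp [hai, ENNReal.zero_rpow_of_pos hs0]
      · have hle : a i ≤ ∑' i, a i := ENNReal.le_tsum i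
        have hti : a i ≠ ⊤ := ne_top_of_le_ne_top hS hle
        calc a i ^ s = a i ^ (s - 1) * a i := by
              rw [show s = (s - 1) + 1 by ring, ENNReal.rpow_add _ _ hai hti,
                ENNReal.rpow_one]; ring_nf
          _ ≤ (∑' i, a i) ^ (s - 1) * a i :=
              mul_le_mul_left (ENNReal.rpow_le_rpow hle (by linarith)) _
    calc ∑' i, a i ^ s ≤ ∑' i, (∑' i, a i) ^ (s - 1) * a i := ENNReal.tsum_le_tsum key
      _ = (∑' i, a i) ^ (s - 1) * ∑' i, a i := ENNReal.tsum_mul_left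
      _ = (∑' i, a i) ^ s := by
          by_cases h0 : ∑' i, a i = 0
          · simp [h0, ENNReal.zero_rpow_of_pos hs0]
          · conv_rhs => rw [show s = (s - 1) + 1 by ring,
              ENNReal.rpow_add _ _ h0 hS, ENNReal.rpow_one]

lemma aux_subst (c : ℝ) (hc : 0 < c) (F : ℝ → ℝ≥0∞) :
    ∫⁻ x in Set.Ioi (0:ℝ), F (c⁻¹ * x) = ENNReal.ofReal c * ∫⁻ x in Set.Ioi (0:ℝ), F x := by
  have hc' : c⁻¹ ≠ 0 := inv_ne_zero hc.ne'
  set e : ℝ ≃ᵐ ℝ := (Homeomorph.mulLeft₀ c⁻¹ hc').toMeasurableEquiv with he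
  have hmap : Measure.map e (volume.restrict (Set.Ioi (0:ℝ)))
      = (ENNReal.ofReal c • volume).restrict (Set.Ioi (0:ℝ)) := by
    have h1 : (fun x : ℝ => c⁻¹ * x) ⁻¹' Set.Ioi (0:ℝ) = Set.Ioi 0 := by
      ext x
      simp only [Set.mem_preimage, Set.mem_Ioi]
      constructor
      · intro h; nlinarith [inv_pos.mpr hc]
      · intro h; positivity
    have h2 : Measure.map (fun x : ℝ => c⁻¹ * x) volume = ENNReal.ofReal c • volume := by
      rw [Real.map_volume_mul_left hc']
      congr 1
      rw [abs_of_pos (by positivity), inv_inv]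
    have : Measure.map (⇑e) (volume.restrict (Set.Ioi (0:ℝ)))
        = Measure.map (fun x : ℝ => c⁻¹ * x) (volume.restrict (Set.Ioi (0:ℝ))) := rfl
    rw [this, ← h1, ← Measure.restrict_map (measurable_const_mul c⁻¹) measurableSet_Ioi,
      h2, h1]
  calc ∫⁻ x in Set.Ioi (0:ℝ), F (c⁻¹ * x)
      = ∫⁻ x, F (e x) ∂(volume.restrict (Set.Ioi (0:ℝ))) := rfl
    _ = ∫⁻ y, F y ∂(Measure.map e (volume.restrict (Set.Ioi (0:ℝ)))) :=
        (MeasureTheory.lintegral_map_equiv F e).symm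
    _ = ENNReal.ofReal c * ∫⁻ x in Set.Ioi (0:ℝ), F x := by
        rw [hmap, Measure.restrict_smul, lintegral_smul_measure, smul_eq_mul]


lemma aux_set_eq {α : Type*} (g : α → ℂ) (c : ℝ) (hc : 0 < c) (l : ℝ) :
    {x | l < ‖(c : ℂ) * g x‖} = {x | l / c < ‖g x‖} := by
  ext x
  simp only [Set.mem_setOf_eq, norm_mul, Complex.norm_real, Real.norm_eq_abs,
    abs_of_pos hc]
  rw [div_lt_iff₀ hc, mul_comm]

lemma aux_ofReal_rpow_pull (c : ℝ) (hc : 0 < c) (p s : ℝ) (hp0 : 0 < p) :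
    ENNReal.ofReal c ^ (p * s) = (ENNReal.ofReal (c ^ p)) ^ s := by
  rw [← ENNReal.ofReal_rpow_of_pos hc, ← ENNReal.rpow_mul]

lemma aux_sup {α : Type*} [MeasurableSpace α] (μ : Measure α) (g : α → ℂ) (c : ℝ)
    (hc : 0 < c) (p : ℝ) (hp0 : 0 < p) (l : ℝ) (hl : 0 ≤ l) :
    ENNReal.ofReal l * (μ {x | l < ‖(c : ℂ) * g x‖}) ^ (1 / p)
      = ENNReal.ofReal (l / c) *
        (ENNReal.ofReal (c ^ p) * μ {x | l / c < ‖g x‖}) ^ (1 / p) := by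
  rw [aux_set_eq g c hc l]
  rw [ENNReal.mul_rpow_of_nonneg _ _ (by positivity : (0:ℝ) ≤ 1/p)]
  rw [← aux_ofReal_rpow_pull c hc p (1/p) hp0, mul_one_div_cancel hp0.ne',
    ENNReal.rpow_one]
  rw [← mul_assoc, ← ENNReal.ofReal_mul (div_nonneg hl hc.le),
    div_mul_cancel₀ _ hc.ne']

lemma aux_Ij {α : Type*} [MeasurableSpace α] (μ : Measure α) (g : α → ℂ) (c : ℝ)
    (hc : 0 < c) (R p : ℝ) (hp0 : 0 < p) (hR : 0 ≤ R) :
    (∫⁻ l in Set.Ioi (0:ℝ), ENNReal.ofReal (l ^ (R - 1)) *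
        (μ {x | l < ‖(c : ℂ) * g x‖}) ^ (R / p))
      = ∫⁻ t in Set.Ioi (0:ℝ), ENNReal.ofReal (t ^ (R - 1)) *
        (ENNReal.ofReal (c ^ p) * μ {x | t < ‖g x‖}) ^ (R / p) := by
  have e1 : (∫⁻ l in Set.Ioi (0:ℝ), ENNReal.ofReal (l ^ (R - 1)) *
      (μ {x | l < ‖(c : ℂ) * g x‖}) ^ (R / p))
      = ∫⁻ l in Set.Ioi (0:ℝ), (fun t => ENNReal.ofReal ((c * t) ^ (R - 1)) *
          (μ {x | t < ‖g x‖}) ^ (R / p)) (c⁻¹ * l) := by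
    apply lintegral_congr
    intro l
    rw [aux_set_eq g c hc l]
    simp only
    rw [mul_inv_cancel_left₀ hc.ne', div_eq_inv_mul]
  rw [e1, aux_subst c hc (fun t => ENNReal.ofReal ((c * t) ^ (R - 1)) *
    (μ {x | t < ‖g x‖}) ^ (R / p)), ← lintegral_const_mul' _ _ ENNReal.ofReal_ne_top]
  apply setLIntegral_congr_fun measurableSet_Ioi
  intro t ht
  dsimp only
  rw [Real.mul_rpow hc.le (le_of_lt ht), ENNReal.ofReal_mul (Real.rpow_nonneg hc.le _)]
  have hcR : ENNReal.ofReal c * ENNReal.ofReal (c ^ (R - 1))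
      = (ENNReal.ofReal (c ^ p)) ^ (R / p) := by
    rw [← ENNReal.ofReal_mul hc.le]
    have h3 : c * c ^ (R - 1) = c ^ R := by
      have h4 := Real.rpow_add hc 1 (R - 1)
      rw [Real.rpow_one] at h4
      rw [← h4]
      congr 1
      ring
    rw [h3, ← aux_ofReal_rpow_pull c hc p (R / p) hp0, mul_div_cancel₀ _ hp0.ne',
      ENNReal.ofReal_rpow_of_pos hc]
  calc ENNReal.ofReal c * (ENNReal.ofReal (c ^ (R - 1)) * ENNReal.ofReal (t ^ (R - 1)) *
        (μ {x | t < ‖g x‖}) ^ (R / p))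
      = (ENNReal.ofReal c * ENNReal.ofReal (c ^ (R - 1))) *
        (ENNReal.ofReal (t ^ (R - 1)) * (μ {x | t < ‖g x‖}) ^ (R / p)) := by ring
    _ = ENNReal.ofReal (t ^ (R - 1)) *
        (ENNReal.ofReal (c ^ p) * μ {x | t < ‖g x‖}) ^ (R / p) := by
        rw [hcR, ENNReal.mul_rpow_of_nonneg _ _ (div_nonneg hR hp0.le)]
        ring

lemma aux_cp (p γ : ℝ) (hp0 : 0 < p) (j : ℤ) :
    ((2:ℝ) ^ (-(j:ℝ) * γ / p)) ^ p = (2:ℝ) ^ (-(j:ℝ) * γ) := by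
  rw [← Real.rpow_mul (by norm_num : (0:ℝ) ≤ 2)]
  congr 1
  field_simp

/-- The Lorentz `L^{p,r}` quasinorm of `g` with respect to `μ`:
`(r ∫_0^∞ λ^r μ({|g|>λ})^{r/p} dλ/λ)^{1/r}` for `r < ∞`, and
`sup_{λ>0} λ μ({|g|>λ})^{1/p}` for `r = ∞`. -/
noncomputable def lorentzNorm {α : Type*} [MeasurableSpace α] (μ : Measure α) (p : ℝ)
    (r : ℝ≥0∞) (g : α → ℂ) : ℝ≥0∞ :=
  if r = ⊤ then ⨆ l : {l : ℝ // 0 < l}, ENNReal.ofReal l.1 * (μ {x | l.1 < ‖g x‖}) ^ (1 / p)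
  else (ENNReal.ofReal r.toReal * ∫⁻ l in Set.Ioi (0 : ℝ),
      ENNReal.ofReal (l ^ (r.toReal - 1)) * (μ {x | l < ‖g x‖}) ^ (r.toReal / p)) ^ (1 / r.toReal)

/-- The measure `μ_γ` on `ℝ^d × ℤ`, `μ_γ(E) = ∑_k 2^{-kγ} meas(E_k)`. -/
noncomputable def muGamma (d : ℕ) (γ : ℝ) : Measure (EuclideanSpace ℝ (Fin d) × ℤ) :=
  (((volume : Measure (EuclideanSpace ℝ (Fin d)))).prod (Measure.count : Measure ℤ)).withDensity
    (fun q => ENNReal.ofReal ((2 : ℝ) ^ (-(q.2 : ℝ) * γ)))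

lemma muGamma_apply (d : ℕ) (γ : ℝ) {s : Set (EuclideanSpace ℝ (Fin d) × ℤ)}
    (hs : MeasurableSet s) :
    muGamma d γ s
      = ∑' k : ℤ, ENNReal.ofReal ((2:ℝ) ^ (-(k:ℝ) * γ)) * volume {x | (x, k) ∈ s} := by
  have hdens : Measurable (fun q : EuclideanSpace ℝ (Fin d) × ℤ =>
      ENNReal.ofReal ((2 : ℝ) ^ (-(q.2 : ℝ) * γ))) :=
    (measurable_from_top (f := fun k : ℤ => ENNReal.ofReal ((2:ℝ) ^ (-(k:ℝ) * γ)))).comp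
      measurable_snd
  haveI : SFinite (Measure.count : Measure ℤ) := by unfold Measure.count; infer_instance
  have hpre : ∀ k : ℤ, MeasurableSet {x' : EuclideanSpace ℝ (Fin d) | (x', k) ∈ s} :=
    fun k => hs.preimage measurable_prodMk_right
  rw [muGamma, withDensity_apply _ hs, ← lintegral_indicator hs _,
    lintegral_prod _ ((hdens.indicator hs).aemeasurable)]
  have step1 : ∀ x : EuclideanSpace ℝ (Fin d),
      (∫⁻ k, s.indicator (fun q => ENNReal.ofReal ((2 : ℝ) ^ (-(q.2 : ℝ) * γ))) (x, k)
        ∂Measure.count)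
      = ∑' k : ℤ, Set.indicator {x' | (x', k) ∈ s}
          (fun _ => ENNReal.ofReal ((2:ℝ) ^ (-(k:ℝ) * γ))) x := by
    intro x
    rw [lintegral_count]
    exact tsum_congr fun k => by by_cases h : (x, k) ∈ s <;> simp [Set.indicator, h]
  simp only [step1]
  rw [lintegral_tsum (fun k : ℤ => ((measurable_const.indicator (hpre k)).aemeasurable))]
  exact tsum_congr fun k => lintegral_indicator_const (hpre k) _

/-- For `1 < p < ∞`, `p ≤ r ≤ ∞`: `‖T_{−γ/p} G‖_{ℓ^r(L^{p,r})} ≤ C ‖G‖_{L^{p,r}(μ_γ)}`,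
where `T_{−γ/p}G(x,j) = 2^{−jγ/p}G(x,j)`. -/
theorem stmt_7 (d : ℕ) (hd : 1 ≤ d) (p γ : ℝ) (hp : 1 < p) (r : ℝ≥0∞)
    (hpr : ENNReal.ofReal p ≤ r) :
    ∃ C : ℝ≥0∞, C ≠ ⊤ ∧ ∀ G : EuclideanSpace ℝ (Fin d) × ℤ → ℂ, Measurable G →
      (if r = ⊤ then
          ⨆ j : ℤ, lorentzNorm (volume : Measure (EuclideanSpace ℝ (Fin d))) p r
            (fun x => (((2 : ℝ) ^ (-(j : ℝ) * γ / p) : ℝ) : ℂ) * G (x, j))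
        else
          (∑' j : ℤ, (lorentzNorm (volume : Measure (EuclideanSpace ℝ (Fin d))) p r
              (fun x => (((2 : ℝ) ^ (-(j : ℝ) * γ / p) : ℝ) : ℂ) * G (x, j))) ^ r.toReal)
            ^ (1 / r.toReal))
      ≤ C * lorentzNorm (muGamma d γ) p r G := by
  refine ⟨1, one_ne_top, fun G hG => ?_⟩
  rw [one_mul]
  have hp0 : 0 < p := lt_trans one_pos hp
  have hc : ∀ j : ℤ, (0:ℝ) < (2:ℝ) ^ (-(j:ℝ) * γ / p) :=
    fun j => Real.rpow_pos_of_pos two_pos _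
  have hmeasG : ∀ j : ℤ, Measurable (fun x : EuclideanSpace ℝ (Fin d) => G (x, j)) :=
    fun j => hG.comp measurable_prodMk_right
  have hdist : ∀ t : ℝ, muGamma d γ {q | t < ‖G q‖}
      = ∑' k : ℤ, ENNReal.ofReal ((2:ℝ) ^ (-(k:ℝ) * γ)) * volume {x | t < ‖G (x, k)‖} := by
    intro t
    rw [muGamma_apply d γ (measurableSet_lt measurable_const hG.norm)]
    rfl
  by_cases hr : r = ⊤
  · subst hr
    simp only [lorentzNorm, if_pos rfl, if_true]
    apply iSup_le
    intro j
    apply iSup_le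
    rintro ⟨l, hl⟩
    have ht : 0 < l / (2:ℝ) ^ (-(j:ℝ) * γ / p) := div_pos hl (hc j)
    refine le_trans ?_ (le_iSup (fun t : {t : ℝ // 0 < t} =>
      ENNReal.ofReal t.1 * (muGamma d γ {q | t.1 < ‖G q‖}) ^ (1/p))
      ⟨l / (2:ℝ) ^ (-(j:ℝ) * γ / p), ht⟩)
    simp only
    rw [aux_sup volume (fun x => G (x, j)) _ (hc j) p hp0 l hl.le, aux_cp p γ hp0 j]
    apply mul_le_mul_right
    apply ENNReal.rpow_le_rpow _ (by positivity : (0:ℝ) ≤ 1/p)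
    rw [hdist]
    exact ENNReal.le_tsum j
  · -- case r < ∞
    have hpR : p ≤ r.toReal := by
      have := ENNReal.toReal_mono hr hpr
      rwa [ENNReal.toReal_ofReal hp0.le] at this
    have hR0 : 0 < r.toReal := lt_of_lt_of_le hp0 hpR
    have hRp1 : 1 ≤ r.toReal / p := (one_le_div hp0).mpr hpR
    simp only [lorentzNorm, if_neg hr]
    apply ENNReal.rpow_le_rpow _ (by positivity : (0:ℝ) ≤ 1/r.toReal)
    have hpow : ∀ x : ℝ≥0∞, (x ^ (1/r.toReal)) ^ r.toReal = x := by
      intro x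
      rw [← ENNReal.rpow_mul, one_div, inv_mul_cancel₀ hR0.ne', ENNReal.rpow_one]
    simp only [hpow]
    rw [ENNReal.tsum_mul_left]
    apply mul_le_mul_right
    have hDanti : ∀ j : ℤ,
        Antitone (fun t : ℝ => volume {x : EuclideanSpace ℝ (Fin d) | t < ‖G (x, j)‖}) := by
      intro j t s hts
      exact measure_mono fun x hx => lt_of_le_of_lt hts hx
    have hgmeas : ∀ j : ℤ, Measurable (fun t : ℝ => ENNReal.ofReal (t ^ (r.toReal - 1)) *
        (ENNReal.ofReal ((2:ℝ) ^ (-(j:ℝ) * γ)) *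
          volume {x : EuclideanSpace ℝ (Fin d) | t < ‖G (x, j)‖}) ^ (r.toReal / p)) := by
      intro j
      apply Measurable.mul
      · fun_prop
      · exact (((hDanti j).measurable).const_mul _).pow_const _
    calc ∑' j : ℤ, (∫⁻ l in Set.Ioi (0:ℝ), ENNReal.ofReal (l ^ (r.toReal - 1)) *
          (volume {x | l < ‖(((2:ℝ) ^ (-(j:ℝ) * γ / p) : ℝ) : ℂ) * G (x, j)‖})
            ^ (r.toReal / p))
        = ∑' j : ℤ, ∫⁻ t in Set.Ioi (0:ℝ), ENNReal.ofReal (t ^ (r.toReal - 1)) *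
            (ENNReal.ofReal ((2:ℝ) ^ (-(j:ℝ) * γ)) *
              volume {x | t < ‖G (x, j)‖}) ^ (r.toReal / p) := by
          refine tsum_congr fun j => ?_
          rw [aux_Ij volume (fun x => G (x, j)) _ (hc j) r.toReal p hp0 hR0.le, aux_cp p γ hp0 j]
      _ = ∫⁻ t in Set.Ioi (0:ℝ), ∑' j : ℤ, ENNReal.ofReal (t ^ (r.toReal - 1)) *
            (ENNReal.ofReal ((2:ℝ) ^ (-(j:ℝ) * γ)) *
              volume {x | t < ‖G (x, j)‖}) ^ (r.toReal / p) :=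
          (lintegral_tsum fun j => (hgmeas j).aemeasurable).symm
      _ ≤ ∫⁻ t in Set.Ioi (0:ℝ), ENNReal.ofReal (t ^ (r.toReal - 1)) *
            (muGamma d γ {q | t < ‖G q‖}) ^ (r.toReal / p) := by
          refine lintegral_mono fun t => ?_
          dsimp only
          rw [ENNReal.tsum_mul_left]
          apply mul_le_mul_right
          calc ∑' j : ℤ, (ENNReal.ofReal ((2:ℝ) ^ (-(j:ℝ) * γ)) *
                volume {x | t < ‖G (x, j)‖}) ^ (r.toReal / p)
              ≤ (∑' j : ℤ, ENNReal.ofReal ((2:ℝ) ^ (-(j:ℝ) * γ)) *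
                volume {x | t < ‖G (x, j)‖}) ^ (r.toReal / p) := aux_tsum_rpow _ hRp1
            _ = (muGamma d γ {q | t < ‖G q‖}) ^ (r.toReal / p) := by rw [hdist t]
end
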